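/- Let Δ = (Δ_0 = 1, Δ_1 = 2, Δ_2, ..., Δ_e) be an O-sequence and let 2 ≤ i ≤ ⌊e/2⌋. If Δ_{i-1} ≤ i - 1 (i.e. Δ_{i-1} is not generic), then Δ_{i-1} ≥ Δ_{e-(i-1)} ≥ Δ_{e-(i-2)} and Δ_{i-1} ≥ Δ_i. -/

import Mathlib

/-- `msucc i n` is Macaulay's `n^{<i>}`: from the `i`-binomial expansion
`n = C(n_i,i) + ... + C(n_j,j)` (computed greedily), replace each term
`C(n_k,k)` by `C(n_k+1,k+1)`.  By convention `msucc i 0 = 0` and `msucc 0 n = 0`. -/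
def msucc : ℕ → ℕ → ℕ
  | 0, _ => 0
  | _ + 1, 0 => 0
  | (i + 1), (n + 1) =>
      let m := Nat.findGreatest (fun k => Nat.choose k (i + 1) ≤ n + 1) (n + i + 2)
      Nat.choose (m + 1) (i + 2) + msucc i ((n + 1) - Nat.choose m (i + 1))

/-- An (infinite) O-sequence: starts with 1 and satisfies Macaulay's growth condition. -/
def IsOSeq (h : ℕ → ℕ) : Prop :=
  h 0 = 1 ∧ ∀ d, 1 ≤ d → h (d + 1) ≤ msucc d (h d)

/-- A finite O-sequence of length `d` (entries of degree `0,…,d`). -/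
def FinOSeq (g : ℕ → ℕ) (d : ℕ) : Prop :=
  g 0 = 1 ∧ ∀ k, 1 ≤ k → k + 1 ≤ d → g (k + 1) ≤ msucc k (g k)

/-- First difference of a sequence, with `(Diff h) 0 = 1`. -/
def Diff (h : ℕ → ℕ) : ℕ → ℕ := fun k => if k = 0 then 1 else h k - h (k - 1)

/-- An SI-sequence of socle degree `e`: symmetric and its first half is differentiable. -/
def IsSISeq (h : ℕ → ℕ) (e : ℕ) : Prop :=
  (∀ i ≤ e, h i = h (e - i)) ∧ FinOSeq (Diff h) (e / 2)

/-- Unimodality of `(h 0, …, h e)`. -/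
def Unimodal (h : ℕ → ℕ) (e : ℕ) : Prop :=
  ∃ m ≤ e, (∀ i j, i ≤ j → j ≤ m → h i ≤ h j) ∧ (∀ i j, m ≤ i → i ≤ j → j ≤ e → h j ≤ h i)

/-
Macaulay's bound is the identity on `n ≤ d`, since the `d`-binomial expansion of such an `n` is
`C(d,d) + C(d-1,d-1) + ⋯ + C(d-n+1,d-n+1)`. Hence once `Δ_k ≤ k` the sequence cannot increase, so
`Δ_{k+1} ≤ Δ_k ≤ k < k + 1` and the condition propagates: `Δ` is non-increasing from degree `k` on.
With `k = i - 1` all three inequalities compare entries in degrees `i - 1 ≤ i ≤ e - (i-1) ≤ e - (i-2)`.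
-/

theorem msucc_of_le {d n : ℕ} (h : n ≤ d) : msucc d n = n := by
  induction d generalizing n with
  | zero => rw [Nat.le_zero.mp h]; rfl
  | succ i ih =>
    match n with
    | 0 => rfl
    | m + 1 =>
      have hgreatest :
          Nat.findGreatest (fun k => Nat.choose k (i + 1) ≤ m + 1) (m + i + 2) = i + 1 := by
        refine Nat.findGreatest_eq_iff.mpr ⟨by omega, fun _ => by simp, fun k hk _ hle => ?_⟩
        have : i + 2 ≤ Nat.choose k (i + 1) := by
          simpa only [Nat.choose_succ_self_right] using Nat.choose_le_choose (i + 1) hk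
        omega
      change Nat.choose (_ + 1) (i + 2) + msucc i (m + 1 - Nat.choose _ (i + 1)) = m + 1
      rw [hgreatest, Nat.choose_self, Nat.choose_self, ih (by omega)]
      omega

namespace FinOSeq

variable {Δ : ℕ → ℕ} {e k : ℕ}

theorem succ_le_of_le_index (hΔ : FinOSeq Δ e) (hk : 1 ≤ k) (hke : k + 1 ≤ e) (h : Δ k ≤ k) :
    Δ (k + 1) ≤ Δ k :=
  msucc_of_le h ▸ hΔ.2 k hk hke

theorem le_index_of_le_index (hΔ : FinOSeq Δ e) (hk : 1 ≤ k) (h : Δ k ≤ k) :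
    ∀ j, k ≤ j → j ≤ e → Δ j ≤ j := by
  intro j hkj
  induction j, hkj using Nat.le_induction with
  | base => exact fun _ => h
  | succ j hkj ih =>
    intro hje
    have hj := ih (by omega)
    have := hΔ.succ_le_of_le_index (by omega) hje hj
    omega

theorem antitoneOn_Icc_of_le_index (hΔ : FinOSeq Δ e) (hk : 1 ≤ k) (h : Δ k ≤ k) :
    AntitoneOn Δ (Set.Icc k e) :=
  antitoneOn_of_succ_le Set.ordConnected_Icc fun j _ hj hj1 => by
    rw [Order.succ_eq_add_one] at hj1 ⊢
    exact hΔ.succ_le_of_le_index (hk.trans hj.1) hj1.2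
      (hΔ.le_index_of_le_index hk h j hj.1 hj.2)

end FinOSeq

theorem stmt12_general (Δ : ℕ → ℕ) (e : ℕ) (hΔ : FinOSeq Δ e)
    (i : ℕ) (hi : 2 ≤ i) (hie : i ≤ e / 2) (hng : Δ (i - 1) ≤ i - 1) :
    Δ (e - (i - 1)) ≤ Δ (i - 1) ∧ Δ (e - (i - 2)) ≤ Δ (e - (i - 1)) ∧ Δ i ≤ Δ (i - 1) := by
  have hanti := hΔ.antitoneOn_Icc_of_le_index (by omega) hng
  have mem : ∀ j, i - 1 ≤ j → j ≤ e → j ∈ Set.Icc (i - 1) e := fun _ h₁ h₂ => ⟨h₁, h₂⟩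
  exact ⟨hanti (mem _ le_rfl (by omega)) (mem _ (by omega) (by omega)) (by omega),
    hanti (mem _ (by omega) (by omega)) (mem _ (by omega) (by omega)) (by omega),
    hanti (mem _ le_rfl (by omega)) (mem _ (by omega) (by omega)) (by omega)⟩

/-- If `Δ = (1, 2, Δ₂, …, Δ_e)` is an O-sequence, `2 ≤ i ≤ ⌊e/2⌋`, and
`Δ (i-1) ≤ i - 1` (not generic), then
`Δ (i-1) ≥ Δ (e-(i-1)) ≥ Δ (e-(i-2))` and `Δ (i-1) ≥ Δ i`. -/
theorem stmt12 (Δ : ℕ → ℕ) (e : ℕ) (hΔ : FinOSeq Δ e) (h1 : Δ 1 = 2)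
    (i : ℕ) (hi : 2 ≤ i) (hie : i ≤ e / 2) (hng : Δ (i - 1) ≤ i - 1) :
    Δ (e - (i - 1)) ≤ Δ (i - 1) ∧ Δ (e - (i - 2)) ≤ Δ (e - (i - 1)) ∧ Δ i ≤ Δ (i - 1) :=
  stmt12_general Δ e hΔ i hi hie hng
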